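/- Let V be a type of vertices and let σ = [v₀,…,v_k], τ = [w₀,…,w_k] be ordered k-simplices. Then Cyl(∂σ, ∂τ) (matching j-th faces) equals the alternating double sum −Σ_{t=0}^{k−1} Σ_{j=t+1}^{k} (−1)^{t+j}[v₀,…,v_t,w_t,…,ŵ_j,…,w_k] − Σ_{t=1}^{k} Σ_{j=0}^{t−1} (−1)^{t+j+1}[v₀,…,v̂_j,…,v_t,w_t,…,w_k]. -/
import Mathlib


/-- The simplicial mapping cylinder chain of two ordered simplices (as lists):
Cyl([v₀,…,v_k],[w₀,…,w_k]) = Σ_t (−1)^{t+1} [v₀,…,v_t,w_t,…,w_k]. -/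
noncomputable def cylL {V : Type*} (l₁ l₂ : List V) : List V →₀ ℤ :=
  ∑ t ∈ Finset.range l₁.length,
    ((-1 : ℤ) ^ (t + 1)) • Finsupp.single (l₁.take (t + 1) ++ l₂.drop t) (1 : ℤ)

lemma take_eraseIdx_of_le' {α : Type*} : ∀ (l : List α) (t j : ℕ), t ≤ j →
    (l.eraseIdx j).take t = l.take t
  | [], _, _, _ => by simp
  | _ :: _, 0, _, _ => by simp
  | _ :: _, _+1, 0, h => absurd h (by omega)
  | a :: l, t+1, j+1, h => by
      simp [List.eraseIdx_cons_succ, take_eraseIdx_of_le' l t j (by omega)]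

lemma drop_eraseIdx_of_le' {α : Type*} : ∀ (l : List α) (t j : ℕ), t ≤ j →
    (l.eraseIdx j).drop t = (l.drop t).eraseIdx (j - t)
  | [], _, _, _ => by simp
  | _ :: _, 0, _, _ => by simp
  | _ :: _, _+1, 0, h => absurd h (by omega)
  | a :: l, t+1, j+1, h => by
      simpa [List.eraseIdx_cons_succ] using drop_eraseIdx_of_le' l t j (by omega)

lemma take_eraseIdx_of_lt' {α : Type*} : ∀ (l : List α) (t j : ℕ), j < t →
    (l.eraseIdx j).take t = (l.take (t+1)).eraseIdx j
  | [], _, _, _ => by simp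
  | _ :: _, 0, _, h => absurd h (by omega)
  | a :: l, t+1, 0, h => by simp
  | a :: l, t+1, j+1, h => by
      simp [List.eraseIdx_cons_succ, take_eraseIdx_of_lt' l t j (by omega)]

lemma drop_eraseIdx_of_lt' {α : Type*} : ∀ (l : List α) (t j : ℕ), j ≤ t →
    (l.eraseIdx j).drop t = l.drop (t+1)
  | [], _, _, _ => by simp
  | _ :: _, 0, _+1, h => absurd h (by omega)
  | a :: l, t, 0, h => by simp
  | a :: l, t+1, j+1, h => by
      simpa [List.eraseIdx_cons_succ] using drop_eraseIdx_of_lt' l t j (by omega)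

lemma neg_one_pow_congr' (m n : ℕ) (h : m % 2 = n % 2) : ((-1:ℤ))^m = (-1)^n := by
  conv_lhs => rw [show m = 2*(m/2)+m%2 from by omega]
  conv_rhs => rw [show n = 2*(n/2)+n%2 from by omega]
  simp [pow_add, pow_mul, h]

/-- Cyl(∂σ, ∂τ), matching j-th faces, equals the alternating double sum
−Σ_{t=0}^{k−1} Σ_{j=t+1}^{k} (−1)^{t+j}[v₀,…,v_t,w_t,…,ŵ_j,…,w_k]
−Σ_{t=1}^{k} Σ_{j=0}^{t−1} (−1)^{t+j+1}[v₀,…,v̂_j,…,v_t,w_t,…,w_k]. -/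
theorem cyl_of_boundaries {V : Type*} (k : ℕ) (v w : Fin (k + 1) → V)
    (hv : (List.ofFn v).Nodup) (hw : (List.ofFn w).Nodup) :
    (∑ j ∈ Finset.range (k + 1),
        ((-1 : ℤ) ^ j) • cylL ((List.ofFn v).eraseIdx j) ((List.ofFn w).eraseIdx j)) =
      -(∑ t ∈ Finset.range k, ∑ j ∈ Finset.Ico (t + 1) (k + 1),
          ((-1 : ℤ) ^ (t + j)) •
            Finsupp.single ((List.ofFn v).take (t + 1) ++
              (((List.ofFn w).drop t).eraseIdx (j - t))) (1 : ℤ)) -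
        ∑ t ∈ Finset.Icc 1 k, ∑ j ∈ Finset.range t,
          ((-1 : ℤ) ^ (t + j + 1)) •
            Finsupp.single ((((List.ofFn v).take (t + 1)).eraseIdx j) ++
              (List.ofFn w).drop t) (1 : ℤ) := by
  set L1 := List.ofFn v with hL1
  set L2 := List.ofFn w with hL2
  have hlen : L1.length = k + 1 := by simp [hL1]
  -- Step 1: LHS as a clean double sum
  have step1 : (∑ j ∈ Finset.range (k + 1),
        ((-1 : ℤ) ^ j) • cylL (L1.eraseIdx j) (L2.eraseIdx j)) =
      ∑ t ∈ Finset.range k, ∑ j ∈ Finset.range (k + 1),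
        ((-1 : ℤ) ^ (j + t + 1)) •
          Finsupp.single ((L1.eraseIdx j).take (t + 1) ++ (L2.eraseIdx j).drop t) (1 : ℤ) := by
    rw [Finset.sum_comm]
    refine Finset.sum_congr rfl fun j hj => ?_
    have hj' : j < k + 1 := Finset.mem_range.mp hj
    unfold cylL
    rw [show (L1.eraseIdx j).length = k by rw [List.length_eraseIdx, hlen]; simp [hj'],
      Finset.smul_sum]
    refine Finset.sum_congr rfl fun t ht => ?_
    rw [smul_smul, ← pow_add, show j + (t + 1) = j + t + 1 from by omega]
  rw [step1]
  -- Step 2: split inner sum at j = t + 1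
  have step2 : ∀ t ∈ Finset.range k,
      (∑ j ∈ Finset.range (k + 1),
        ((-1 : ℤ) ^ (j + t + 1)) •
          Finsupp.single ((L1.eraseIdx j).take (t + 1) ++ (L2.eraseIdx j).drop t) (1 : ℤ)) =
      (∑ j ∈ Finset.range (t + 1),
        ((-1 : ℤ) ^ (j + t + 1)) •
          Finsupp.single ((L1.take (t + 2)).eraseIdx j ++ L2.drop (t + 1)) (1 : ℤ)) +
      (∑ j ∈ Finset.Ico (t + 1) (k + 1),
        ((-1 : ℤ) ^ (j + t + 1)) •
          Finsupp.single (L1.take (t + 1) ++ (L2.drop t).eraseIdx (j - t)) (1 : ℤ)) := by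
    intro t ht
    have htk : t < k := Finset.mem_range.mp ht
    rw [← Finset.sum_range_add_sum_Ico _ (show t + 1 ≤ k + 1 by omega)]
    congr 1
    · refine Finset.sum_congr rfl fun j hj => ?_
      have hjt : j < t + 1 := Finset.mem_range.mp hj
      rw [take_eraseIdx_of_lt' L1 (t+1) j hjt, drop_eraseIdx_of_lt' L2 t j (by omega),
        show t + 1 + 1 = t + 2 from rfl]
    · refine Finset.sum_congr rfl fun j hj => ?_
      have hjt : t + 1 ≤ j := (Finset.mem_Ico.mp hj).1
      rw [take_eraseIdx_of_le' _ _ _ hjt, drop_eraseIdx_of_le' _ _ _ (by omega)]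
  rw [Finset.sum_congr rfl step2, Finset.sum_add_distrib]
  -- Step 3: match with the RHS
  have hX : -(∑ t ∈ Finset.range k, ∑ j ∈ Finset.Ico (t + 1) (k + 1),
        ((-1 : ℤ) ^ (t + j)) •
          Finsupp.single (L1.take (t + 1) ++ (L2.drop t).eraseIdx (j - t)) (1 : ℤ)) =
      ∑ t ∈ Finset.range k, ∑ j ∈ Finset.Ico (t + 1) (k + 1),
        ((-1 : ℤ) ^ (j + t + 1)) •
          Finsupp.single (L1.take (t + 1) ++ (L2.drop t).eraseIdx (j - t)) (1 : ℤ) := by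
    rw [← Finset.sum_neg_distrib]
    refine Finset.sum_congr rfl fun t ht => ?_
    rw [← Finset.sum_neg_distrib]
    refine Finset.sum_congr rfl fun j hj => ?_
    rw [← neg_smul]
    congr 1
    rw [show -((-1:ℤ)^(t+j)) = (-1)^(t+j+1) by rw [pow_succ]; ring]
    exact neg_one_pow_congr' _ _ (by omega)
  have hY : -(∑ t ∈ Finset.Icc 1 k, ∑ j ∈ Finset.range t,
        ((-1 : ℤ) ^ (t + j + 1)) •
          Finsupp.single ((L1.take (t + 1)).eraseIdx j ++ L2.drop t) (1 : ℤ)) =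
      ∑ t ∈ Finset.range k, ∑ j ∈ Finset.range (t + 1),
        ((-1 : ℤ) ^ (j + t + 1)) •
          Finsupp.single ((L1.take (t + 2)).eraseIdx j ++ L2.drop (t + 1)) (1 : ℤ) := by
    rw [show Finset.Icc 1 k = Finset.Ico 1 (k + 1) from (Finset.Ico_add_one_right_eq_Icc 1 k).symm,
      Finset.sum_Ico_eq_sum_range]
    simp only [Nat.add_sub_cancel]
    rw [← Finset.sum_neg_distrib]
    refine Finset.sum_congr rfl fun t ht => ?_
    rw [Nat.add_comm 1 t, ← Finset.sum_neg_distrib]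
    refine Finset.sum_congr rfl fun j hj => ?_
    rw [← neg_smul, show t + 1 + 1 = t + 2 from rfl]
    congr 1
    rw [show -((-1:ℤ)^(t+1+j+1)) = (-1)^(t+1+j+1+1) by rw [pow_succ]; ring]
    exact neg_one_pow_congr' _ _ (by omega)
  rw [sub_eq_add_neg, ← hX, ← hY]
  abel
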